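/- arXiv:1802.03569 — 3 statements merged into one kernel-verified Lean document; each statement's English description precedes it below -/
import Mathlib

section
/- Let (a_n)_{n≥0} be a sequence of nonnegative real numbers with ∑_{n=0}^∞ a_n < ∞, and define f : [-1,1] → ℝ by f(ξ) = ∑_{n=0}^∞ a_n ξ^n. Then for every real inner product space H, every finite family of unit vectors x_1, …, x_N in H, and every family of real coefficients c_1, …, c_N, one has ∑_{i=1}^N ∑_{j=1}^N c_i c_j f(⟪x_i, x_j⟫) ≥ 0. (Note that |⟪x_i, x_j⟫| ≤ 1 by the Cauchy–Schwarz inequality, so f(⟪x_i, x_j⟫) is well defined.) -/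
/-!
The Gram matrix `(⟪xᵢ, xⱼ⟫)` is positive semidefinite, hence so are its entrywise powers by the
Schur product theorem. The matrix `(f ⟪xᵢ, xⱼ⟫)` is a convergent series of nonnegative multiples of
these powers (convergent because `|⟪xᵢ, xⱼ⟫| ≤ 1`), and positive semidefiniteness passes to limits.
-/

open scoped RealInnerProductSpace ComplexOrder

theorem summable_mul_pow_of_abs_le_one {a : ℕ → ℝ} (ha : Summable a) {t : ℝ} (ht : |t| ≤ 1) :
    Summable fun k ↦ a k * t ^ k :=
  .of_norm_bounded ha.abs fun k ↦ by
    rw [Real.norm_eq_abs, abs_mul, abs_pow]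
    exact mul_le_of_le_one_right (abs_nonneg _) (pow_le_one₀ (abs_nonneg _) ht)

namespace Matrix

variable {n 𝕜 : Type*} [RCLike 𝕜]

theorem PosSemidef.map_pow [Finite n] {A : Matrix n n 𝕜} (hA : A.PosSemidef) (k : ℕ) :
    (A.map (· ^ k)).PosSemidef := by
  induction k with
  | zero =>
    convert posSemidef_vecMulVec_self_star (1 : n → 𝕜) using 1
    ext i j
    simp [vecMulVec_apply]
  | succ k ih =>
    convert ih.hadamard hA using 1
    ext i j
    simp [pow_succ]

theorem PosSemidef.of_hasSum [Fintype n] {M : ℕ → Matrix n n 𝕜} {A : Matrix n n 𝕜}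
    (hMA : HasSum M A) (hM : ∀ k, (M k).PosSemidef) : A.PosSemidef := by
  have hentry (i j : n) : HasSum (fun k ↦ M k i j) (A i j) :=
    Pi.hasSum.mp (Pi.hasSum.mp hMA i) j
  refine .of_dotProduct_mulVec_nonneg ?_ fun x ↦ ?_
  · refine hMA.matrix_conjTranspose.unique ?_
    simpa only [(hM _).isHermitian.eq] using hMA
  · have hquad : HasSum (fun k ↦ star x ⬝ᵥ (M k *ᵥ x)) (star x ⬝ᵥ (A *ᵥ x)) :=
      hasSum_sum fun i _ ↦ (hasSum_sum fun j _ ↦ (hentry i j).mul_right (x j)).mul_left (star x i)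
    exact hquad.nonneg fun k ↦ (hM k).dotProduct_mulVec_nonneg x

theorem PosSemidef.map_tsum_mul_pow [Fintype n] {A : Matrix n n ℝ}
    (hA : A.PosSemidef) (hA_le : ∀ i j, |A i j| ≤ 1) {a : ℕ → ℝ} (ha : ∀ k, 0 ≤ a k)
    (hsum : Summable a) : (A.map fun t ↦ ∑' k, a k * t ^ k).PosSemidef :=
  .of_hasSum (M := fun k ↦ a k • A.map (· ^ k))
    (Pi.hasSum.mpr fun i ↦ Pi.hasSum.mpr fun j ↦
      (summable_mul_pow_of_abs_le_one hsum (hA_le i j)).hasSum)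
    fun k ↦ (hA.map_pow k).smul (ha k)

end Matrix

/-- If `a : ℕ → ℝ` is nonnegative and summable, then the function
`f(ξ) = ∑' n, a n * ξ^n` composed with the inner product is a positive definite kernel
on the unit sphere of any real inner product space. -/
theorem nonneg_power_series_pos_def_on_sphere
    (a : ℕ → ℝ) (ha : ∀ n, 0 ≤ a n) (hsum : Summable a)
    {H : Type*} [NormedAddCommGroup H] [InnerProductSpace ℝ H]
    (N : ℕ) (x : Fin N → H) (hx : ∀ i, ‖x i‖ = 1) (c : Fin N → ℝ) :
    0 ≤ ∑ i, ∑ j, c i * c j * ∑' n : ℕ, a n * ⟪x i, x j⟫ ^ n := by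
  have hgram_le (i j : Fin N) : |Matrix.gram ℝ x i j| ≤ 1 := by
    simpa [hx] using abs_real_inner_le_norm (x i) (x j)
  have hK := (Matrix.posSemidef_gram ℝ x).map_tsum_mul_pow hgram_le ha hsum
  simpa [dotProduct, Matrix.mulVec, Finset.mul_sum, mul_assoc, mul_comm, mul_left_comm]
    using hK.dotProduct_mulVec_nonneg c
end

section
/- Let τ be a real number with τ ≥ π/2. Then for every real inner product space H, every finite family of unit vectors x_1, …, x_N in H, and every family of real coefficients c_1, …, c_N, one has ∑_{i=1}^N ∑_{j=1}^N c_i c_j (τ - arccos(⟪x_i, x_j⟫)) ≥ 0; that is, the kernel (x, z) ↦ τ - arccos(⟪x, z⟫) is positive definite on the unit sphere of H. -/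
/-!
Since `arccos = π/2 - arcsin`, the kernel is the constant `τ - π/2 ≥ 0` plus `arcsin ⟪x, z⟫`.
On `(-1, 1)`, `arcsin t = ∑ aₙ t^(2n+1)` with `aₙ ≥ 0`: this series differentiates termwise to
the binomial series of `(1 - t²)^(-1/2)`, whose coefficients `(1/2)(3/2)⋯(n - 1/2)/n!` are
positive. By the Schur product theorem every power `⟪x, z⟫ ^ k` of the Gram kernel is positive
semidefinite, hence so is `arcsin ⟪x, z⟫` for vectors of norm `< 1`; unit vectors are reached by
scaling `x` to `r • x` and letting `r → 1`.
-/

open scoped RealInnerProductSpace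

open Real

namespace Matrix

lemma PosSemidef.sum_mul_mul_nonneg {ι : Type*} [Fintype ι] {A : Matrix ι ι ℝ}
    (hA : A.PosSemidef) (c : ι → ℝ) : 0 ≤ ∑ i, ∑ j, c i * c j * A i j := by
  have h := hA.dotProduct_mulVec_nonneg c
  simp only [dotProduct, mulVec, star_trivial, Finset.mul_sum] at h
  simpa only [mul_right_comm _ (c _), mul_comm (A _ _), mul_assoc] using h

lemma posSemidef_inner_pow {ι E : Type*} [Finite ι] [NormedAddCommGroup E]
    [InnerProductSpace ℝ E] (x : ι → E) (n : ℕ) :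
    (of fun i j ↦ ⟪x i, x j⟫ ^ n).PosSemidef := by
  induction n with
  | zero => simpa [vecMulVec] using posSemidef_vecMulVec_self_star (1 : ι → ℝ)
  | succ n ih =>
    have h : (of fun i j ↦ ⟪x i, x j⟫ ^ (n + 1)) =
        (of fun i j ↦ ⟪x i, x j⟫ ^ n) ⊙ gram ℝ x := by
      ext i j
      simp [gram_apply, pow_succ]
    rw [h]
    exact ih.hadamard (posSemidef_gram ℝ x)

end Matrix

namespace Real

lemma multichoose_half_nonneg (n : ℕ) : 0 ≤ Ring.multichoose (1 / 2 : ℝ) n := by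
  have h := Ring.factorial_nsmul_multichoose_eq_ascPochhammer (1 / 2 : ℝ) n
  rw [Polynomial.ascPochhammer_smeval_eq_eval, nsmul_eq_mul] at h
  have hpos := ascPochhammer_pos n (1 / 2 : ℝ) (by norm_num)
  rw [← h] at hpos
  exact (pos_of_mul_pos_right hpos (by positivity)).le

lemma hasSum_multichoose_half_mul_pow {u : ℝ} (hu : |u| < 1) :
    HasSum (fun n ↦ Ring.multichoose (1 / 2 : ℝ) n * u ^ n) (1 / √(1 - u)) := by
  have hu' : u ∈ Metric.eball (0 : ℝ) 1 := by
    rw [Metric.mem_eball, edist_zero_right, enorm_eq_nnnorm, ENNReal.coe_lt_one_iff,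
      ← NNReal.coe_lt_coe]
    simpa using hu
  have h := (one_div_one_sub_rpow_hasFPowerSeriesOnBall_zero (1 / 2)).hasSum hu'
  simpa [FormalMultilinearSeries.ofScalars_apply_eq, Ring.multichoose_eq, mul_comm,
    Real.sqrt_eq_rpow] using h

lemma hasSum_multichoose_half_mul_pow_two_mul {t : ℝ} (ht : |t| < 1) :
    HasSum (fun n ↦ Ring.multichoose (1 / 2 : ℝ) n * t ^ (2 * n)) (1 / √(1 - t ^ 2)) := by
  have ht2 : |t ^ 2| < 1 := by simpa [abs_pow] using pow_lt_one₀ (abs_nonneg t) ht two_ne_zero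
  simpa only [pow_mul] using hasSum_multichoose_half_mul_pow ht2

noncomputable def arcsinCoeff (n : ℕ) : ℝ := Ring.multichoose (1 / 2 : ℝ) n / (2 * n + 1)

lemma arcsinCoeff_nonneg (n : ℕ) : 0 ≤ arcsinCoeff n :=
  div_nonneg (multichoose_half_nonneg n) (by positivity)

lemma hasDerivAt_arcsinCoeff_mul_pow (n : ℕ) (t : ℝ) :
    HasDerivAt (fun s ↦ arcsinCoeff n * s ^ (2 * n + 1))
      (Ring.multichoose (1 / 2 : ℝ) n * t ^ (2 * n)) t := by
  refine ((hasDerivAt_pow (2 * n + 1) t).const_mul (arcsinCoeff n)).congr_deriv ?_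
  rw [arcsinCoeff, Nat.add_sub_cancel]
  field_simp
  push_cast
  ring

lemma hasDerivAt_tsum_arcsinCoeff_mul_pow {t : ℝ} (ht : |t| < 1) :
    HasDerivAt (fun s ↦ ∑' n, arcsinCoeff n * s ^ (2 * n + 1)) (1 / √(1 - t ^ 2)) t := by
  set r := (1 + |t|) / 2 with hr_def
  have ht' := abs_lt.1 ht
  have hr : |r| < 1 := by rw [abs_of_nonneg (by positivity)]; linarith
  rw [← (hasSum_multichoose_half_mul_pow_two_mul ht).tsum_eq]
  refine hasDerivAt_tsum_of_isPreconnected (hasSum_multichoose_half_mul_pow_two_mul hr).summable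
    isOpen_Ioo isPreconnected_Ioo (t := Set.Ioo (-r) r)
    (fun n s _ ↦ hasDerivAt_arcsinCoeff_mul_pow n s) (fun n s hs ↦ ?_)
    (y₀ := 0) (by constructor <;> linarith [abs_nonneg t]) (by simp [summable_zero])
    (by constructor <;> linarith [neg_abs_le t, le_abs_self t])
  rw [norm_mul, norm_pow, Real.norm_of_nonneg (multichoose_half_nonneg n), pow_mul, pow_mul]
  gcongr
  · exact multichoose_half_nonneg n
  · rw [Real.norm_eq_abs]
    exact abs_le.2 ⟨hs.1.le, hs.2.le⟩

lemma summable_arcsinCoeff_mul_pow {t : ℝ} (ht : |t| < 1) :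
    Summable (fun n ↦ arcsinCoeff n * t ^ (2 * n + 1)) := by
  refine (hasSum_multichoose_half_mul_pow_two_mul ht).summable.of_norm_bounded fun n ↦ ?_
  have hcoeff : arcsinCoeff n ≤ Ring.multichoose (1 / 2 : ℝ) n :=
    div_le_self (multichoose_half_nonneg n) (by linarith [n.cast_nonneg (α := ℝ)])
  have hpow : |t| ^ (2 * n + 1) ≤ t ^ (2 * n) := by
    calc |t| ^ (2 * n + 1) ≤ |t| ^ (2 * n) := pow_le_pow_of_le_one (abs_nonneg t) ht.le (by omega)
      _ = t ^ (2 * n) := by rw [pow_mul, sq_abs, ← pow_mul]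
  rw [norm_mul, norm_pow, Real.norm_of_nonneg (arcsinCoeff_nonneg n), Real.norm_eq_abs]
  exact mul_le_mul hcoeff hpow (by positivity) (multichoose_half_nonneg n)

lemma hasSum_arcsin {t : ℝ} (ht : |t| < 1) :
    HasSum (fun n ↦ arcsinCoeff n * t ^ (2 * n + 1)) (arcsin t) := by
  have hT : ∀ s ∈ Set.Ioo (-1 : ℝ) 1, |s| < 1 := fun s hs ↦ abs_lt.2 hs
  have key : Set.EqOn (fun s ↦ ∑' n, arcsinCoeff n * s ^ (2 * n + 1)) arcsin (Set.Ioo (-1) 1) :=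
    isOpen_Ioo.eqOn_of_deriv_eq isPreconnected_Ioo
      (fun s hs ↦
        (hasDerivAt_tsum_arcsinCoeff_mul_pow (hT s hs)).differentiableAt.differentiableWithinAt)
      (fun s hs ↦ (differentiableAt_arcsin.2 ⟨hs.1.ne', hs.2.ne⟩).differentiableWithinAt)
      (fun s hs ↦ by rw [(hasDerivAt_tsum_arcsinCoeff_mul_pow (hT s hs)).deriv, deriv_arcsin])
      (x := 0) (by norm_num) (by simp)
  rw [← key (abs_lt.1 ht)]
  exact (summable_arcsinCoeff_mul_pow ht).hasSum

end Real

section ArcsinKernel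

variable {ι H : Type*} [Fintype ι] [NormedAddCommGroup H] [InnerProductSpace ℝ H]

lemma sum_mul_mul_arcsin_inner_nonneg_of_norm_lt_one (x : ι → H) (hx : ∀ i, ‖x i‖ < 1)
    (c : ι → ℝ) : 0 ≤ ∑ i, ∑ j, c i * c j * arcsin ⟪x i, x j⟫ := by
  have hinner : ∀ i j, |⟪x i, x j⟫| < 1 := fun i j ↦ (abs_real_inner_le_norm _ _).trans_lt
    (mul_lt_one_of_nonneg_of_lt_one_left (norm_nonneg _) (hx i) (hx j).le)
  have hsum : HasSum (fun n ↦ arcsinCoeff n * ∑ i, ∑ j, c i * c j * ⟪x i, x j⟫ ^ (2 * n + 1))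
      (∑ i, ∑ j, c i * c j * arcsin ⟪x i, x j⟫) := by
    simp only [Finset.mul_sum, mul_left_comm (arcsinCoeff _)]
    exact hasSum_sum fun i _ ↦ hasSum_sum fun j _ ↦ (hasSum_arcsin (hinner i j)).mul_left _
  exact hsum.nonneg fun n ↦ mul_nonneg (arcsinCoeff_nonneg n)
    ((Matrix.posSemidef_inner_pow x _).sum_mul_mul_nonneg c)

lemma sum_mul_mul_arcsin_inner_nonneg (x : ι → H) (hx : ∀ i, ‖x i‖ ≤ 1) (c : ι → ℝ) :
    0 ≤ ∑ i, ∑ j, c i * c j * arcsin ⟪x i, x j⟫ := by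
  have hcont : Continuous fun r : ℝ ↦ ∑ i, ∑ j, c i * c j * arcsin ⟪r • x i, r • x j⟫ := by
    fun_prop
  refine ge_of_tendsto (by simpa using (hcont.tendsto 1).mono_left nhdsWithin_le_nhds)
    (Filter.mem_of_superset (Ioo_mem_nhdsLT zero_lt_one) fun r hr ↦ ?_)
  refine sum_mul_mul_arcsin_inner_nonneg_of_norm_lt_one _ (fun i ↦ ?_) c
  rw [norm_smul, Real.norm_of_nonneg hr.1.le]
  exact (mul_le_of_le_one_right hr.1.le (hx i)).trans_lt hr.2

end ArcsinKernel

/-- For `τ ≥ π/2`, the kernel `(x, z) ↦ τ - arccos ⟪x, z⟫` is positive definite on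
the unit sphere of any real inner product space. -/
theorem tau_sub_arccos_pos_def_on_sphere
    (τ : ℝ) (hτ : Real.pi / 2 ≤ τ)
    {H : Type*} [NormedAddCommGroup H] [InnerProductSpace ℝ H]
    (N : ℕ) (x : Fin N → H) (hx : ∀ i, ‖x i‖ = 1) (c : Fin N → ℝ) :
    0 ≤ ∑ i, ∑ j, c i * c j * (τ - Real.arccos ⟪x i, x j⟫) := by
  have hsplit : ∑ i, ∑ j, c i * c j * (τ - arccos ⟪x i, x j⟫)
      = (τ - π / 2) * (∑ i, c i) ^ 2 + ∑ i, ∑ j, c i * c j * arcsin ⟪x i, x j⟫ := by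
    rw [sq, Finset.sum_mul_sum, Finset.mul_sum, ← Finset.sum_add_distrib]
    refine Finset.sum_congr rfl fun i _ ↦ ?_
    rw [Finset.mul_sum, ← Finset.sum_add_distrib]
    exact Finset.sum_congr rfl fun j _ ↦ by rw [arccos_eq_pi_div_two_sub_arcsin]; ring
  rw [hsplit]
  exact add_nonneg (mul_nonneg (by linarith) (sq_nonneg _))
    (sum_mul_mul_arcsin_inner_nonneg x (fun i ↦ (hx i).le) c)
end

section
/- Let t > 0 be a real number. For every real inner product space H, every finite family of unit vectors x_1, …, x_N in H, and every family of real coefficients c_1, …, c_N, one has ∑_{i=1}^N ∑_{j=1}^N c_i c_j · exp(-t · arccos(⟪x_i, x_j⟫)) ≥ 0; that is, the kernel (x, z) ↦ exp(-t · arccos(⟪x, z⟫)) is positive definite on the unit sphere of H. -/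
open scoped RealInnerProductSpace

/-!
Since `arccos s = π / 2 - arcsin s`, the kernel is `exp (-t π / 2) * F ⟪x, z⟫` with
`F s = exp (t * arcsin s)`. `F` solves `(1 - s²) F'' = s F' + t² F` with `F 0 = 1`, `F' 0 = t`;
the power series solution has coefficients `a (n + 2) = (n² + t²) / ((n + 1) (n + 2)) * a n`,
which are nonnegative for `t ≥ 0` and bounded, and an integrating factor shows that it equals `F`
on `(-1, 1)`. By the Schur product theorem every matrix `(⟪x i, x j⟫ ^ n)` is positive
semidefinite, hence so is `(F (r * ⟪x i, x j⟫))` for `0 < r < 1`; let `r → 1`.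
-/

open Real Set

noncomputable def expArcsinCoeff (t : ℝ) : ℕ → ℝ
  | 0 => 1
  | 1 => t
  | n + 2 => (n ^ 2 + t ^ 2) / ((n + 1) * (n + 2)) * expArcsinCoeff t n

namespace expArcsinCoeff

variable {t : ℝ}

theorem mul_add_two (t : ℝ) (n : ℕ) :
    ((n : ℝ) + 1) * (n + 2) * expArcsinCoeff t (n + 2)
      = (n ^ 2 + t ^ 2) * expArcsinCoeff t n := by
  rw [expArcsinCoeff]
  field_simp

theorem nonneg (ht : 0 ≤ t) (n : ℕ) : 0 ≤ expArcsinCoeff t n := by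
  induction n using Nat.strong_induction_on with
  | _ n ih =>
    match n with
    | 0 => simp [expArcsinCoeff]
    | 1 => simpa [expArcsinCoeff] using ht
    | n + 2 =>
      rw [expArcsinCoeff]
      exact mul_nonneg (by positivity) (ih n (by omega))

theorem abs_add_two_le {n : ℕ} (hn : t ^ 2 ≤ n) :
    |expArcsinCoeff t (n + 2)| ≤ |expArcsinCoeff t n| := by
  have hratio : (0 : ℝ) ≤ (n ^ 2 + t ^ 2) / ((n + 1) * (n + 2)) := by positivity
  rw [expArcsinCoeff, abs_mul, abs_of_nonneg hratio]
  refine mul_le_of_le_one_left (abs_nonneg _) ?_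
  rw [div_le_one (by positivity)]
  nlinarith

theorem exists_abs_le (t : ℝ) : ∃ C, ∀ n, |expArcsinCoeff t n| ≤ C := by
  set M := ⌈t ^ 2⌉₊
  refine ⟨∑ k ∈ Finset.range (M + 2), |expArcsinCoeff t k|, fun n => ?_⟩
  induction n using Nat.strong_induction_on with
  | _ n ih =>
    by_cases hn : n < M + 2
    · exact Finset.single_le_sum (fun k _ => abs_nonneg (expArcsinCoeff t k))
        (Finset.mem_range.mpr hn)
    · obtain ⟨m, rfl⟩ : ∃ m, n = m + 2 := ⟨n - 2, by omega⟩
      have hm : t ^ 2 ≤ m := (Nat.le_ceil _).trans (by exact_mod_cast (by omega : M ≤ m))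
      exact (abs_add_two_le hm).trans (ih m (by omega))

end expArcsinCoeff

theorem natCast_descFactorial_mul_add_one (n k : ℕ) :
    ((n + 1 + k).descFactorial k : ℝ) * (n + 1) = (n + (k + 1)).descFactorial (k + 1) := by
  rw [show n + (k + 1) = n + 1 + k by ring, Nat.descFactorial_succ, Nat.add_sub_cancel]
  push_cast
  ring

theorem natCast_descFactorial_two_add (n : ℕ) : (n.descFactorial 2 : ℝ) + n = n ^ 2 := by
  rcases n with _ | m
  · simp
  · simp only [Nat.descFactorial_succ, add_tsub_cancel_right, tsub_zero, Nat.descFactorial_zero,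
      mul_one, Nat.cast_mul, Nat.cast_add, Nat.cast_one]
    ring

/-- `seriesDeriv a k` is the termwise `k`-th derivative of `x ↦ ∑' n, a n * x ^ n`. -/
noncomputable def seriesDeriv (a : ℕ → ℝ) (k : ℕ) (x : ℝ) : ℝ :=
  ∑' n, (n + k).descFactorial k * a (n + k) * x ^ n

namespace seriesDeriv

variable {a : ℕ → ℝ} {C x : ℝ}

theorem summable (ha : ∀ n, |a n| ≤ C) (hx : |x| < 1) (k : ℕ) :
    Summable fun n => ((n + k).descFactorial k : ℝ) * a (n + k) * x ^ n := by
  refine .of_norm_bounded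
    ((summable_descFactorial_mul_geometric_of_norm_lt_one k (r := |x|) (by simpa)).mul_left C)
    fun n => ?_
  rw [norm_mul, norm_mul, Real.norm_natCast, norm_pow, Real.norm_eq_abs, Real.norm_eq_abs]
  calc _ = |a (n + k)| * ((n + k).descFactorial k * |x| ^ n) := by ring
    _ ≤ C * ((n + k).descFactorial k * |x| ^ n) := by gcongr; exact ha _

theorem apply_zero (a : ℕ → ℝ) (k : ℕ) : seriesDeriv a k 0 = k.factorial * a k := by
  rw [seriesDeriv, tsum_eq_single 0 fun n hn => by simp [hn]]
  simp [Nat.descFactorial_self]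

theorem hasSum_pow_mul (ha : ∀ n, |a n| ≤ C) (hx : |x| < 1) (k : ℕ) :
    HasSum (fun n => (n.descFactorial k : ℝ) * a n * x ^ n) (x ^ k * seriesDeriv a k x) := by
  rw [← hasSum_nat_add_iff' k]
  have hlow : ∑ n ∈ Finset.range k, (n.descFactorial k : ℝ) * a n * x ^ n = 0 :=
    Finset.sum_eq_zero fun n hn => by
      simp [Nat.descFactorial_eq_zero_iff_lt.mpr (Finset.mem_range.mp hn)]
  rw [hlow, sub_zero]
  exact ((summable ha hx k).hasSum.mul_left (x ^ k)).congr_fun fun n => by ring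

theorem hasDerivAt (ha : ∀ n, |a n| ≤ C) (hx : |x| < 1) (k : ℕ) :
    HasDerivAt (seriesDeriv a k) (seriesDeriv a (k + 1) x) x := by
  obtain ⟨r, hxr, hr1⟩ : ∃ r, |x| < r ∧ |r| < 1 :=
    ⟨(1 + |x|) / 2, by linarith, by rw [abs_of_nonneg (by positivity)]; linarith⟩
  have hterm : ∀ y n,
      ((n + 1 + k).descFactorial k : ℝ) * a (n + 1 + k) * ((n + 1 : ℕ) * y ^ (n + 1 - 1))
        = (n + (k + 1)).descFactorial (k + 1) * a (n + (k + 1)) * y ^ n := fun y n => by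
    rw [Nat.add_sub_cancel, ← natCast_descFactorial_mul_add_one,
      show n + (k + 1) = n + 1 + k by ring]
    push_cast
    ring
  have hbound : Summable fun n => C * ((n + k).descFactorial k * (n * r ^ (n - 1))) := by
    rw [← summable_nat_add_iff 1]
    refine ((summable_descFactorial_mul_geometric_of_norm_lt_one (k + 1) hr1).mul_left C).congr
      fun n => ?_
    rw [← natCast_descFactorial_mul_add_one]
    push_cast
    ring
  have := hasDerivAt_tsum_of_isPreconnected hbound isOpen_Ioo isPreconnected_Ioo
    (g := fun n y => ((n + k).descFactorial k : ℝ) * a (n + k) * y ^ n)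
    (fun n y _ => (hasDerivAt_pow n y).const_mul _) (fun n y hy => ?_)
    (y₀ := 0) (by simp [(abs_nonneg x).trans_lt hxr]) (summable ha (by simp) k) (abs_lt.mp hxr)
  · rwa [tsum_eq_zero_add' ((summable ha hx (k + 1)).congr fun n => (hterm x n).symm),
      Nat.cast_zero, zero_mul, mul_zero, zero_add, tsum_congr (hterm x)] at this
  · have hy : |y| ≤ r := (abs_lt.mpr hy).le
    rw [norm_mul, norm_mul, norm_mul, Real.norm_natCast, Real.norm_natCast, norm_pow,
      Real.norm_eq_abs, Real.norm_eq_abs]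
    calc _ = |a (n + k)| * ((n + k).descFactorial k * (n * |y| ^ (n - 1))) := by ring
      _ ≤ C * ((n + k).descFactorial k * (n * r ^ (n - 1))) :=
          mul_le_mul (ha _) (by gcongr) (by positivity) ((abs_nonneg _).trans (ha 0))

end seriesDeriv

theorem eq_mul_exp_sub_of_hasDerivAt {u s s' : ℝ → ℝ} {U : Set ℝ} (hU : IsOpen U)
    (hU' : IsPreconnected U) (hs : ∀ y ∈ U, HasDerivAt s (s' y) y)
    (hu : ∀ y ∈ U, HasDerivAt u (s' y * u y) y) {a y : ℝ} (ha : a ∈ U) (hy : y ∈ U) :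
    u y = u a * exp (s y - s a) := by
  have hv : ∀ z ∈ U, HasDerivAt (fun z => u z * exp (-s z)) 0 z := fun z hz =>
    ((hu z hz).mul (hs z hz).neg.exp).congr_deriv (by ring)
  have := hU.is_const_of_deriv_eq_zero hU'
    (fun z hz => (hv z hz).differentiableAt.differentiableWithinAt) (fun z hz => (hv z hz).deriv)
    hy ha
  rw [exp_sub, ← mul_div_assoc, eq_div_iff (exp_pos _).ne']
  simp only [exp_neg] at this
  field_simp at this
  linear_combination this

section ExpArcsin

variable {t x : ℝ}

local notation "S" => seriesDeriv (expArcsinCoeff t)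

theorem seriesDeriv_expArcsinCoeff_ode (hx : |x| < 1) :
    (1 - x ^ 2) * S 2 x = x * S 1 x + t ^ 2 * S 0 x := by
  obtain ⟨C, hC⟩ := expArcsinCoeff.exists_abs_le t
  have hS2 : HasSum (fun n : ℕ => ((n : ℝ) ^ 2 + t ^ 2) * expArcsinCoeff t n * x ^ n) (S 2 x) :=
    (seriesDeriv.summable hC hx 2).hasSum.congr_fun fun n => by
      rw [← expArcsinCoeff.mul_add_two]
      simp [Nat.descFactorial_succ]
  have hsum := ((seriesDeriv.hasSum_pow_mul hC hx 2).add (seriesDeriv.hasSum_pow_mul hC hx 1)).add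
    ((seriesDeriv.hasSum_pow_mul hC hx 0).mul_left (t ^ 2))
  have := hS2.unique (hsum.congr_fun fun n => by
    rw [← natCast_descFactorial_two_add]
    simp only [Nat.descFactorial_succ, tsub_zero, Nat.descFactorial_zero, mul_one, Nat.cast_mul,
      Nat.cast_one, one_mul]
    ring)
  linear_combination this

theorem hasDerivAt_sqrt_one_sub_sq (hx : x ∈ Ioo (-1 : ℝ) 1) :
    HasDerivAt (fun y => √(1 - y ^ 2)) (-x / √(1 - x ^ 2)) x := by
  have hpos : 0 < 1 - x ^ 2 := by nlinarith [hx.1, hx.2]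
  refine (((hasDerivAt_pow 2 x).const_sub 1).sqrt hpos.ne').congr_deriv ?_
  field_simp
  ring

theorem sqrt_one_sub_sq_mul_seriesDeriv_one (hx : x ∈ Ioo (-1 : ℝ) 1) :
    √(1 - x ^ 2) * S 1 x = t * S 0 x := by
  obtain ⟨C, hC⟩ := expArcsinCoeff.exists_abs_le t
  -- `G = √(1 - y²) F' - t F` satisfies `G' = (-t * arcsin)' G` by the ODE, and `G 0 = 0`.
  have hG' : ∀ y ∈ Ioo (-1 : ℝ) 1, HasDerivAt (fun y => √(1 - y ^ 2) * S 1 y - t * S 0 y)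
      (-t * (1 / √(1 - y ^ 2)) * (√(1 - y ^ 2) * S 1 y - t * S 0 y)) y := fun y hy => by
    have hy1 : |y| < 1 := abs_lt.mpr hy
    have hpos : 0 < 1 - y ^ 2 := by nlinarith [hy.1, hy.2]
    have hsq : √(1 - y ^ 2) ^ 2 = 1 - y ^ 2 := sq_sqrt hpos.le
    have hsqrt : 0 < √(1 - y ^ 2) := sqrt_pos.mpr hpos
    refine (((hasDerivAt_sqrt_one_sub_sq hy).mul (seriesDeriv.hasDerivAt hC hy1 1)).sub
      ((seriesDeriv.hasDerivAt hC hy1 0).const_mul t)).congr_deriv ?_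
    rw [one_add_one_eq_two]
    field_simp
    linear_combination seriesDeriv_expArcsinCoeff_ode hy1 + S 2 y * hsq
  have := eq_mul_exp_sub_of_hasDerivAt isOpen_Ioo isPreconnected_Ioo
    (s := fun y => -t * arcsin y)
    (fun y hy => (hasDerivAt_arcsin hy.1.ne' hy.2.ne).const_mul (-t)) hG'
    (by norm_num : (0 : ℝ) ∈ Ioo (-1) 1) hx
  simp only [seriesDeriv.apply_zero, expArcsinCoeff] at this
  linear_combination this

theorem hasSum_expArcsinCoeff_mul_pow (hx : x ∈ Ioo (-1 : ℝ) 1) :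
    HasSum (fun n => expArcsinCoeff t n * x ^ n) (exp (t * arcsin x)) := by
  obtain ⟨C, hC⟩ := expArcsinCoeff.exists_abs_le t
  have hF' : ∀ y ∈ Ioo (-1 : ℝ) 1, HasDerivAt (S 0) (t * (1 / √(1 - y ^ 2)) * S 0 y) y :=
    fun y hy => (seriesDeriv.hasDerivAt hC (abs_lt.mpr hy) 0).congr_deriv <| by
      have hsqrt : 0 < √(1 - y ^ 2) := sqrt_pos.mpr (by nlinarith [hy.1, hy.2])
      field_simp
      linear_combination sqrt_one_sub_sq_mul_seriesDeriv_one (t := t) hy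
  have := eq_mul_exp_sub_of_hasDerivAt isOpen_Ioo isPreconnected_Ioo
    (s := fun y => t * arcsin y)
    (fun y hy => (hasDerivAt_arcsin hy.1.ne' hy.2.ne).const_mul t) hF'
    (by norm_num : (0 : ℝ) ∈ Ioo (-1) 1) hx
  have hsum : HasSum _ (S 0 x) := (seriesDeriv.summable hC (abs_lt.mpr hx) 0).hasSum
  simpa [this, seriesDeriv.apply_zero, expArcsinCoeff] using hsum

end ExpArcsin

section PositiveDefinite

variable {ι H : Type*} [Fintype ι] [SeminormedAddCommGroup H] [InnerProductSpace ℝ H]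

theorem posSemidef_inner_pow (x : ι → H) (n : ℕ) :
    (Matrix.of fun i j => ⟪x i, x j⟫ ^ n).PosSemidef := by
  induction n with
  | zero => simpa [Matrix.vecMulVec] using Matrix.posSemidef_vecMulVec_self_star (1 : ι → ℝ)
  | succ n ih =>
    have : (Matrix.of fun i j => ⟪x i, x j⟫ ^ (n + 1))
        = (Matrix.of fun i j => ⟪x i, x j⟫ ^ n).hadamard (Matrix.gram ℝ x) := by
      ext i j
      simp [pow_succ, Matrix.gram]
    rw [this]
    exact ih.hadamard (Matrix.posSemidef_gram ℝ x)

theorem sum_mul_mul_inner_pow_nonneg (x : ι → H) (c : ι → ℝ) (n : ℕ) :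
    0 ≤ ∑ i, ∑ j, c i * c j * ⟪x i, x j⟫ ^ n := by
  have := (posSemidef_inner_pow x n).dotProduct_mulVec_nonneg c
  simp only [dotProduct, Matrix.mulVec, Matrix.of_apply, star_trivial, Finset.mul_sum] at this
  exact this.trans_eq (Finset.sum_congr rfl fun i _ => Finset.sum_congr rfl fun j _ => by ring)

theorem sum_mul_mul_nonneg_of_hasSum_inner_pow {a : ℕ → ℝ} (ha : ∀ n, 0 ≤ a n) {x : ι → H}
    {K : ι → ι → ℝ} (hK : ∀ i j, HasSum (fun n => a n * ⟪x i, x j⟫ ^ n) (K i j)) (c : ι → ℝ) :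
    0 ≤ ∑ i, ∑ j, c i * c j * K i j := by
  have hsum : HasSum (fun n => a n * ∑ i, ∑ j, c i * c j * ⟪x i, x j⟫ ^ n)
      (∑ i, ∑ j, c i * c j * K i j) :=
    (hasSum_sum fun i _ => hasSum_sum fun j _ => (hK i j).mul_left (c i * c j)).congr_fun
      fun n => by simp only [Finset.mul_sum]; ring_nf
  exact hsum.nonneg fun n => mul_nonneg (ha n) (sum_mul_mul_inner_pow_nonneg x c n)

theorem sum_mul_mul_comp_inner_nonneg {f : ℝ → ℝ} (hf : ContinuousOn f (Icc (-1) 1))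
    {a : ℕ → ℝ} (ha : ∀ n, 0 ≤ a n)
    (hfa : ∀ s ∈ Ioo (-1 : ℝ) 1, HasSum (fun n => a n * s ^ n) (f s))
    {x : ι → H} (hx : ∀ i, ‖x i‖ ≤ 1) (c : ι → ℝ) :
    0 ≤ ∑ i, ∑ j, c i * c j * f ⟪x i, x j⟫ := by
  have hinner : ∀ i j, |⟪x i, x j⟫| ≤ 1 := fun i j =>
    (abs_real_inner_le_norm _ _).trans (mul_le_one₀ (hx i) (norm_nonneg _) (hx j))
  have hmem : ∀ r ∈ Icc (0 : ℝ) 1, ∀ i j, r * ⟪x i, x j⟫ ∈ Icc (-1) 1 := fun r hr i j => by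
    rw [mem_Icc, ← abs_le, abs_mul, abs_of_nonneg hr.1]
    exact mul_le_one₀ hr.2 (abs_nonneg _) (hinner i j)
  have hpos : ∀ r ∈ Ioo (0 : ℝ) 1, 0 ≤ ∑ i, ∑ j, c i * c j * f (r * ⟪x i, x j⟫) := fun r hr => by
    refine sum_mul_mul_nonneg_of_hasSum_inner_pow
      (fun n => mul_nonneg (ha n) (pow_nonneg hr.1.le n))
      (fun i j => (hfa _ ?_).congr_fun fun n => by ring) c
    rw [mem_Ioo, ← abs_lt, abs_mul, abs_of_pos hr.1]
    exact (mul_le_of_le_one_right hr.1.le (hinner i j)).trans_lt hr.2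
  have hcont : ContinuousOn (fun r => ∑ i, ∑ j, c i * c j * f (r * ⟪x i, x j⟫)) (Icc 0 1) :=
    continuousOn_finsetSum _ fun i _ => continuousOn_finsetSum _ fun j _ =>
      continuousOn_const.mul
        (hf.comp (continuousOn_id.mul continuousOn_const) fun r hr => hmem r hr i j)
  have := le_on_closure hpos continuousOn_const (by rwa [closure_Ioo zero_ne_one])
    (by rw [closure_Ioo zero_ne_one]; exact right_mem_Icc.mpr zero_le_one)
  simpa using this

end PositiveDefinite

theorem hasSum_exp_neg_mul_arccos (t : ℝ) {s : ℝ} (hs : s ∈ Ioo (-1 : ℝ) 1) :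
    HasSum (fun n => exp (-(t * (π / 2))) * expArcsinCoeff t n * s ^ n) (exp (-t * arccos s)) := by
  have hexp : exp (-(t * (π / 2))) * exp (t * arcsin s) = exp (-t * arccos s) := by
    rw [← exp_add, arccos_eq_pi_div_two_sub_arcsin]
    ring_nf
  simpa only [hexp, mul_assoc] using
    (hasSum_expArcsinCoeff_mul_pow (t := t) hs).mul_left (exp (-(t * (π / 2))))

/-- For `t > 0`, the kernel `(x, z) ↦ exp (-t * arccos ⟪x, z⟫)` is positive definite
on the unit sphere of any real inner product space. -/
theorem exp_neg_arccos_pos_def_on_sphere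
    (t : ℝ) (ht : 0 < t)
    {H : Type*} [NormedAddCommGroup H] [InnerProductSpace ℝ H]
    (N : ℕ) (x : Fin N → H) (hx : ∀ i, ‖x i‖ = 1) (c : Fin N → ℝ) :
    0 ≤ ∑ i, ∑ j, c i * c j * Real.exp (-t * Real.arccos ⟪x i, x j⟫) :=
  sum_mul_mul_comp_inner_nonneg (by fun_prop)
    (fun n => mul_nonneg (exp_pos _).le (expArcsinCoeff.nonneg ht.le n))
    (fun s hs => hasSum_exp_neg_mul_arccos t hs) (fun i => (hx i).le) c
end
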